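/- Let ρ be a cash-subadditive risk measure on X that is SSD-consistent, where SSD-consistency means ρ(X) ≥ ρ(Y) whenever E[(X−K)+] ≥ E[(Y−K)+] for all K ∈ ℝ. For Z ∈ X define ψ_Z(X) := ρ(Z + sup_{t∈[0,1]} (ES_t(X) − ES_t(Z))). Then ψ_Z is monotone, cash subadditive, law invariant and quasi-convex, and ρ(X) = min_{Z ∈ X} ψ_Z(X). -/

import Mathlib

/-!
Expected Shortfall has the Rockafellar–Uryasev representation
`ES_t X = min_K (K + E[(X - K)⁺] / (1 - t))` for `t < 1`, attained at `K = VaR_t X`: transporting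
Lebesgue measure on `(0, 1)` through the quantile function of `X` gives back the law of `X`, and
the integrand `(VaR_a X - K)⁺` vanishes exactly for `a ≤ P(X ≤ K)`. This makes `ES_t` monotone,
cash additive, convex and law invariant, and shows that `ES_t X ≤ ES_t Y` for all `t` if and only
if `E[(X - K)⁺] ≤ E[(Y - K)⁺]` for all `K` (for a given `K` use `t = P(X ≤ K)`).

Each property of `ψ_Z` then follows from the corresponding one of `ES` through the gap
`sup_t (ES_t X - ES_t Z)`, which vanishes for `Z = X`. Finally `Z` plus this gap dominates `X` in
every `ES_t`, hence in the stop-loss order, so SSD-consistency gives `ρ X ≤ ψ_Z X`.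
-/

open MeasureTheory

variable {Ω : Type*} [MeasurableSpace Ω]

noncomputable def cst (μ : Measure Ω) [IsFiniteMeasure μ] (c : ℝ) : Lp ℝ ⊤ μ :=
  Lp.const ⊤ μ c

noncomputable def esssup (μ : Measure Ω) [IsFiniteMeasure μ] (X : Lp ℝ ⊤ μ) : ℝ :=
  sInf {c : ℝ | X ≤ cst μ c}

/-- Left `t`-quantile (Value-at-Risk) of a random variable. -/
noncomputable def VaRr (μ : Measure Ω) (t : ℝ) (X : Ω → ℝ) : ℝ :=
  sInf {y : ℝ | t ≤ (μ {ω | X ω ≤ y}).toReal}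

/-- Expected Shortfall at level `t ∈ [0,1]`. -/
noncomputable def ES (μ : Measure Ω) [IsFiniteMeasure μ] (t : ℝ) (X : Lp ℝ ⊤ μ) : ℝ :=
  if t < 1 then (1 / (1 - t)) * ∫ a in Set.Ioo t 1, VaRr μ a X else esssup μ X

/-- `ψ_Z(X) = ρ(Z + sup_{t ∈ [0,1]} (ES_t(X) − ES_t(Z)))`. -/
noncomputable def psiZ (μ : Measure Ω) [IsFiniteMeasure μ]
    (ρ : Lp ℝ ⊤ μ → ℝ) (Z X : Lp ℝ ⊤ μ) : ℝ :=
  ρ (Z + cst μ (sSup {d : ℝ | ∃ t ∈ Set.Icc (0 : ℝ) 1, d = ES μ t X - ES μ t Z}))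

open ProbabilityTheory Set Filter

noncomputable def quantile (ν : Measure ℝ) (t : ℝ) : ℝ := sInf {y | t ≤ cdf ν y}

section Quantile

variable {ν : Measure ℝ} {t y : ℝ}

lemma nonempty_le_cdf (ht : t < 1) : {y | t ≤ cdf ν y}.Nonempty :=
  ((tendsto_cdf_atTop ν).eventually (eventually_ge_nhds ht)).exists

lemma bddBelow_le_cdf (ht : 0 < t) : BddBelow {y | t ≤ cdf ν y} := by
  obtain ⟨b, hb⟩ := ((tendsto_cdf_atBot ν).eventually (eventually_lt_nhds ht)).exists_forall_of_atBot
  exact ⟨b, fun y hy => not_lt.1 fun hyb => (hb y hyb.le).not_ge hy⟩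

lemma le_cdf_quantile (ht : t ∈ Ioo 0 1) : t ≤ cdf ν (quantile ν t) := by
  have hS := nonempty_le_cdf (ν := ν) ht.2
  have hB := bddBelow_le_cdf (ν := ν) ht.1
  refine ge_of_tendsto (((cdf ν).right_continuous _).mono Ioi_subset_Ici_self) ?_
  filter_upwards [self_mem_nhdsWithin] with y hy
  obtain ⟨z, hz, hzy⟩ := exists_lt_of_csInf_lt hS hy
  exact hz.trans ((cdf ν).mono hzy.le)

lemma quantile_le_iff (ht : t ∈ Ioo 0 1) : quantile ν t ≤ y ↔ t ≤ cdf ν y :=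
  ⟨fun h => (le_cdf_quantile ht).trans ((cdf ν).mono h),
    fun h => csInf_le (bddBelow_le_cdf ht.1) h⟩

lemma quantile_monotoneOn : MonotoneOn (quantile ν) (Ioo 0 1) := fun _ ha _ hb hab =>
  (quantile_le_iff ha).2 (hab.trans (le_cdf_quantile hb))

lemma aemeasurable_quantile : AEMeasurable (quantile ν) (volume.restrict (Ioo 0 1)) :=
  aemeasurable_restrict_of_monotoneOn measurableSet_Ioo quantile_monotoneOn

variable [IsProbabilityMeasure ν]

lemma le_quantile {c : ℝ} (hc : ∀ᵐ x ∂ν, c ≤ x) (ht : t ∈ Ioo 0 1) : c ≤ quantile ν t := by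
  by_contra! h
  have hnull : ν (Iic (quantile ν t)) = 0 :=
    measure_mono_null (fun x hx => not_le.2 ((mem_Iic.1 hx).trans_lt h)) (ae_iff.1 hc)
  have := le_cdf_quantile (ν := ν) ht
  rw [cdf_eq_real, measureReal_def, hnull] at this
  exact ht.1.not_ge (by simpa using this)

lemma volume_Ioo_inter_Iic {c : ℝ} (h1 : c ≤ 1) :
    volume (Ioo (0 : ℝ) 1 ∩ Iic c) = ENNReal.ofReal c := by
  rw [measure_congr ((Ioo_ae_eq_Ioc (μ := volume)).inter (ae_eq_refl (Iic c))), Ioc_inter_Iic,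
    min_eq_right h1, Real.volume_Ioc, sub_zero]

theorem map_quantile : (volume.restrict (Ioo 0 1)).map (quantile ν) = ν := by
  have : IsProbabilityMeasure (volume.restrict (Ioo (0 : ℝ) 1)) :=
    ⟨by simp [Real.volume_Ioo]⟩
  have := Measure.isProbabilityMeasure_map (aemeasurable_quantile (ν := ν))
  refine Measure.ext_of_Iic _ _ fun y => ?_
  rw [Measure.map_apply_of_aemeasurable aemeasurable_quantile measurableSet_Iic,
    Measure.restrict_apply₀ (aemeasurable_quantile.nullMeasurable measurableSet_Iic),
    ← ofReal_cdf, ← volume_Ioo_inter_Iic (cdf_le_one ν y), inter_comm]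
  congr 1
  ext a
  simp only [mem_inter_iff, mem_preimage, mem_Iic, and_congr_right_iff]
  exact fun ha => quantile_le_iff ha

lemma integral_comp_quantile {g : ℝ → ℝ} (hg : AEStronglyMeasurable g ν) :
    ∫ a in Ioo 0 1, g (quantile ν a) = ∫ x, g x ∂ν := by
  rw [← map_quantile (ν := ν)] at hg
  rw [← integral_map aemeasurable_quantile hg, map_quantile]

lemma integrableOn_quantile (h : Integrable id ν) : IntegrableOn (quantile ν) (Ioo 0 1) := by
  rw [← map_quantile (ν := ν)] at h
  exact (integrable_map_measure (map_quantile (ν := ν) ▸ aestronglyMeasurable_id)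
    aemeasurable_quantile).1 h

end Quantile

section Crossing

variable {q : ℝ → ℝ} {t K : ℝ}

lemma setIntegral_Ioo_sub_le (hq : IntegrableOn q (Ioo 0 1)) (ht : 0 ≤ t) :
    ∫ a in Ioo t 1, (q a - K) ≤ ∫ a in Ioo 0 1, max (q a - K) 0 := by
  have hqK : IntegrableOn (fun a => q a - K) (Ioo 0 1) :=
    hq.sub (integrableOn_const (by simp [Real.volume_Ioo]))
  have hsub : Ioo t 1 ⊆ Ioo 0 1 := Ioo_subset_Ioo_left ht
  calc ∫ a in Ioo t 1, (q a - K) ≤ ∫ a in Ioo t 1, max (q a - K) 0 :=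
        integral_mono (hqK.mono_set hsub) (hqK.mono_set hsub).pos_part fun _ => le_max_left _ _
    _ ≤ ∫ a in Ioo 0 1, max (q a - K) 0 :=
        setIntegral_mono_set hqK.pos_part (ae_of_all _ fun _ => le_max_right _ _)
          hsub.eventuallyLE

lemma setIntegral_Ioo_sub_eq_of_crossing (ht : 0 ≤ t)
    (hle : ∀ a ∈ Ioo 0 1, a ≤ t → q a ≤ K) (hge : ∀ a ∈ Ioo 0 1, t < a → K ≤ q a) :
    ∫ a in Ioo t 1, (q a - K) = ∫ a in Ioo 0 1, max (q a - K) 0 := by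
  have hind : EqOn (fun a => max (q a - K) 0) ((Ioi t).indicator fun a => q a - K) (Ioo 0 1) := by
    intro a ha
    rcases le_or_gt a t with hat | hta
    · simp [indicator_of_notMem (notMem_Ioi.2 hat), hle a ha hat]
    · simp [indicator_of_mem (mem_Ioi.2 hta), hge a ha hta]
  rw [setIntegral_congr_fun measurableSet_Ioo hind, setIntegral_indicator measurableSet_Ioi,
    Ioo_inter_Ioi, max_eq_right ht]

end Crossing

noncomputable def stopLoss (μ : Measure Ω) (X : Ω → ℝ) (K : ℝ) : ℝ := ∫ ω, max (X ω - K) 0 ∂μ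

section Linfty

variable {μ : Measure Ω}

lemma ae_abs_le_norm (X : Lp ℝ ⊤ μ) : ∀ᵐ ω ∂μ, |X ω| ≤ ‖X‖ := by
  filter_upwards [enorm_ae_le_eLpNormEssSup X μ] with ω hω
  rw [← eLpNorm_exponent_top, ← Lp.enorm_def, ← ofReal_norm, ← ofReal_norm,
    ENNReal.ofReal_le_ofReal_iff (norm_nonneg _)] at hω
  simpa using hω

lemma coeFn_smul_add_smul (U V : Lp ℝ ⊤ μ) (l : ℝ) :
    ⇑(l • U + (1 - l) • V) =ᵐ[μ] fun ω => l * U ω + (1 - l) * V ω := by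
  filter_upwards [Lp.coeFn_add (l • U) ((1 - l) • V), Lp.coeFn_smul l U,
    Lp.coeFn_smul (1 - l) V] with ω h1 h2 h3
  rw [h1, Pi.add_apply, h2, h3, Pi.smul_apply, Pi.smul_apply, smul_eq_mul, smul_eq_mul]

variable [IsFiniteMeasure μ]

lemma coeFn_cst (c : ℝ) : ∀ᵐ ω ∂μ, cst μ c ω = c :=
  (Lp.coeFn_const ⊤ μ c).mono fun ω h => by rw [cst, h, Function.const_apply]

lemma coeFn_add_cst (X : Lp ℝ ⊤ μ) (m : ℝ) : ⇑(X + cst μ m) =ᵐ[μ] fun ω => X ω + m := by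
  filter_upwards [Lp.coeFn_add X (cst μ m), coeFn_cst m] with ω h1 h2
  rw [h1, Pi.add_apply, h2]

lemma le_cst_iff {X : Lp ℝ ⊤ μ} {c : ℝ} : X ≤ cst μ c ↔ ∀ᵐ ω ∂μ, X ω ≤ c := by
  rw [← Lp.coeFn_le]
  exact eventually_congr ((coeFn_cst c).mono fun ω h => by rw [h])

lemma cst_le_iff {X : Lp ℝ ⊤ μ} {c : ℝ} : cst μ c ≤ X ↔ ∀ᵐ ω ∂μ, c ≤ X ω := by
  rw [← Lp.coeFn_le]
  exact eventually_congr ((coeFn_cst c).mono fun ω h => by rw [h])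

lemma monotone_cst : Monotone (cst μ) := fun _ _ hab =>
  le_cst_iff.2 ((coeFn_cst _).mono fun _ h => h.le.trans hab)

lemma cst_add (a b : ℝ) : cst μ (a + b) = cst μ a + cst μ b := map_add _ a b

lemma cst_zero : cst μ 0 = 0 := map_zero _

variable [NeZero μ]

lemma esssup_le_iff (X : Lp ℝ ⊤ μ) (c : ℝ) : esssup μ X ≤ c ↔ ∀ᵐ ω ∂μ, X ω ≤ c := by
  have hbdd : IsBoundedUnder (· ≤ ·) (ae μ) X :=
    isBoundedUnder_of_eventually_le ((ae_abs_le_norm X).mono fun _ h => (le_abs_self _).trans h)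
  have hcobdd : IsCoboundedUnder (· ≤ ·) (ae μ) X :=
    isCoboundedUnder_le_of_eventually_le _ ((ae_abs_le_norm X).mono fun _ h => neg_le_of_abs_le h)
  have : esssup μ X = essSup X μ := by
    simp only [esssup, le_cst_iff, essSup, limsup_eq]
  rw [this]
  exact ⟨fun h => (ae_le_essSup hbdd).mono fun _ hω => hω.trans h,
    fun h => essSup_le_of_ae_le c h hcobdd⟩

lemma ae_le_esssup (X : Lp ℝ ⊤ μ) : ∀ᵐ ω ∂μ, X ω ≤ esssup μ X :=
  (esssup_le_iff X _).1 le_rfl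

end Linfty

section StopLoss

variable {μ : Measure Ω}

lemma stopLoss_nonneg (X : Ω → ℝ) (K : ℝ) : 0 ≤ stopLoss μ X K :=
  integral_nonneg fun _ => le_max_right _ _

lemma stopLoss_eq_integral_map (X : Lp ℝ ⊤ μ) (K : ℝ) :
    stopLoss μ X K = ∫ x, max (x - K) 0 ∂(μ.map X) :=
  (integral_map (Lp.aestronglyMeasurable X).aemeasurable
    (by fun_prop : Continuous fun x : ℝ => max (x - K) 0).aestronglyMeasurable).symm

variable [IsFiniteMeasure μ]

lemma integrable_max_sub (X : Lp ℝ ⊤ μ) (K : ℝ) : Integrable (fun ω => max (X ω - K) 0) μ :=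
  (((Lp.memLp X).integrable le_top).sub (integrable_const K)).pos_part

lemma stopLoss_eq_zero_iff (X : Lp ℝ ⊤ μ) (K : ℝ) : stopLoss μ X K = 0 ↔ ∀ᵐ ω ∂μ, X ω ≤ K := by
  rw [stopLoss, integral_eq_zero_iff_of_nonneg (f := fun ω => max (X ω - K) 0)
    (fun _ => le_max_right _ _) (integrable_max_sub X K)]
  exact eventually_congr (ae_of_all _ fun ω => by simp)

lemma stopLoss_add_cst (X : Lp ℝ ⊤ μ) (m K : ℝ) :
    stopLoss μ ⇑(X + cst μ m) K = stopLoss μ X (K - m) := by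
  refine integral_congr_ae ((coeFn_add_cst X m).mono fun ω h => ?_)
  simp only [h, sub_sub_eq_add_sub]

lemma stopLoss_smul_add_smul_le (U V : Lp ℝ ⊤ μ) {l : ℝ} (hl0 : 0 ≤ l) (hl1 : l ≤ 1)
    (KU KV : ℝ) : stopLoss μ ⇑(l • U + (1 - l) • V) (l * KU + (1 - l) * KV)
      ≤ l * stopLoss μ U KU + (1 - l) * stopLoss μ V KV := by
  have hU := (integrable_max_sub U KU).const_mul l
  have hV := (integrable_max_sub V KV).const_mul (1 - l)
  rw [stopLoss, stopLoss, stopLoss, ← integral_const_mul, ← integral_const_mul,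
    ← integral_add hU hV]
  refine integral_mono_ae (integrable_max_sub _ _) (hU.add hV) ?_
  filter_upwards [coeFn_smul_add_smul U V l] with ω h
  have hU' := mul_le_mul_of_nonneg_left (le_max_left (U ω - KU) 0) hl0
  have hV' := mul_le_mul_of_nonneg_left (le_max_left (V ω - KV) 0) (sub_nonneg.2 hl1)
  refine max_le ?_ (by positivity)
  rw [h]
  linarith

end StopLoss

section ExpectedShortfall

variable {μ : Measure Ω} [IsProbabilityMeasure μ] {t : ℝ}

instance isProbabilityMeasure_map_Lp (X : Lp ℝ ⊤ μ) : IsProbabilityMeasure (μ.map X) :=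
  Measure.isProbabilityMeasure_map (Lp.aestronglyMeasurable X).aemeasurable

lemma stopLoss_cst (c K : ℝ) : stopLoss μ ⇑(cst μ c) K = max (c - K) 0 := by
  rw [stopLoss, integral_congr_ae ((coeFn_cst c).mono fun ω h => by rw [h])]
  simp

lemma VaRr_eq_quantile {f : Ω → ℝ} (hf : AEMeasurable f μ) (t : ℝ) :
    VaRr μ t f = quantile (μ.map f) t := by
  have := Measure.isProbabilityMeasure_map hf
  simp only [VaRr, quantile, cdf_eq_real, measureReal_def,
    Measure.map_apply_of_aemeasurable hf measurableSet_Iic]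
  rfl

lemma integrable_id_map (X : Lp ℝ ⊤ μ) : Integrable id (μ.map X) :=
  (integrable_map_measure aestronglyMeasurable_id
    (Lp.aestronglyMeasurable X).aemeasurable).2 ((Lp.memLp X).integrable le_top)

lemma stopLoss_eq_setIntegral_quantile (X : Lp ℝ ⊤ μ) (K : ℝ) :
    stopLoss μ X K = ∫ a in Ioo 0 1, max (quantile (μ.map X) a - K) 0 := by
  rw [stopLoss_eq_integral_map, integral_comp_quantile
    (by fun_prop : Continuous fun x : ℝ => max (x - K) 0).aestronglyMeasurable]

lemma stopLoss_eq_zero_of_cdf_eq_one (X : Lp ℝ ⊤ μ) {K : ℝ} (h : 1 ≤ cdf (μ.map X) K) :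
    stopLoss μ X K = 0 := by
  rw [stopLoss_eq_setIntegral_quantile]
  refine setIntegral_eq_zero_of_forall_eq_zero fun a ha => max_eq_right ?_
  rw [sub_nonpos, quantile_le_iff ha]
  exact ha.2.le.trans h

lemma setIntegral_quantile_sub (X : Lp ℝ ⊤ μ) (ht0 : 0 ≤ t) (ht1 : t < 1) (K : ℝ) :
    ∫ a in Ioo t 1, (quantile (μ.map X) a - K) = (1 - t) * (ES μ t X - K) := by
  have hq := (integrableOn_quantile (integrable_id_map X)).mono_set (Ioo_subset_Ioo_left ht0)
  rw [integral_sub hq (integrableOn_const (by simp [Real.volume_Ioo])), setIntegral_const,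
    smul_eq_mul, measureReal_def, Real.volume_Ioo, ENNReal.toReal_ofReal (by linarith), ES,
    if_pos ht1]
  simp only [VaRr_eq_quantile (Lp.aestronglyMeasurable X).aemeasurable]
  field_simp [(by linarith : 1 - t ≠ 0)]

lemma ES_eq_add_stopLoss_of_crossing (X : Lp ℝ ⊤ μ) (ht0 : 0 ≤ t) (ht1 : t < 1) {K : ℝ}
    (hle : ∀ a ∈ Ioo 0 1, a ≤ t → quantile (μ.map X) a ≤ K)
    (hge : ∀ a ∈ Ioo 0 1, t < a → K ≤ quantile (μ.map X) a) :
    ES μ t X = K + stopLoss μ X K / (1 - t) := by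
  rw [stopLoss_eq_setIntegral_quantile, ← setIntegral_Ioo_sub_eq_of_crossing ht0 hle hge,
    setIntegral_quantile_sub X ht0 ht1]
  field_simp [(by linarith : 1 - t ≠ 0)]
  ring

lemma ES_le_add_stopLoss (X : Lp ℝ ⊤ μ) (ht0 : 0 ≤ t) (ht1 : t < 1) (K : ℝ) :
    ES μ t X ≤ K + stopLoss μ X K / (1 - t) := by
  have h := setIntegral_Ioo_sub_le (K := K) (integrableOn_quantile (integrable_id_map X)) ht0
  rw [setIntegral_quantile_sub X ht0 ht1, ← stopLoss_eq_setIntegral_quantile] at h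
  rw [← sub_le_iff_le_add', le_div_iff₀ (by linarith), mul_comm]
  exact h

theorem isLeast_ES (X : Lp ℝ ⊤ μ) (ht0 : 0 ≤ t) (ht1 : t < 1) :
    IsLeast (range fun K => K + stopLoss μ X K / (1 - t)) (ES μ t X) := by
  refine ⟨?_, forall_mem_range.2 (ES_le_add_stopLoss X ht0 ht1)⟩
  rcases ht0.eq_or_lt with rfl | ht0
  -- `VaRr μ 0 X` is a junk value (`sInf ℝ = 0`), so at `t = 0` a lower bound of `X` is used.
  · have hlow : ∀ᵐ x ∂μ.map X, -‖X‖ ≤ x :=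
      (ae_map_iff (Lp.aestronglyMeasurable X).aemeasurable measurableSet_Ici).2
        ((ae_abs_le_norm X).mono fun _ h => neg_le_of_abs_le h)
    exact ⟨-‖X‖, (ES_eq_add_stopLoss_of_crossing X le_rfl ht1
      (fun a ha h => absurd h (not_le.2 ha.1)) fun a ha _ => le_quantile hlow ha).symm⟩
  · exact ⟨quantile (μ.map X) t, (ES_eq_add_stopLoss_of_crossing X ht0.le ht1
      (fun a ha h => quantile_monotoneOn ha ⟨ht0, ht1⟩ h)
      fun a ha h => quantile_monotoneOn ⟨ht0, ht1⟩ ha h.le).symm⟩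

lemma ES_eq_add_stopLoss_at_cdf (X : Lp ℝ ⊤ μ) {K : ℝ} (h : cdf (μ.map X) K < 1) :
    ES μ (cdf (μ.map X) K) X = K + stopLoss μ X K / (1 - cdf (μ.map X) K) := by
  refine ES_eq_add_stopLoss_of_crossing X (cdf_nonneg _ _) h
    (fun a ha hle => (quantile_le_iff ha).2 hle) fun a ha hlt => ?_
  exact (lt_of_not_ge fun hle => hlt.not_ge ((quantile_le_iff ha).1 hle)).le

lemma ES_one (X : Lp ℝ ⊤ μ) : ES μ 1 X = esssup μ X := if_neg (lt_irrefl 1)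

lemma esssup_le_esssup_of_stopLoss_le {U V : Lp ℝ ⊤ μ}
    (h : ∀ K, stopLoss μ U K ≤ stopLoss μ V K) : esssup μ U ≤ esssup μ V := by
  have hV := (stopLoss_eq_zero_iff V _).2 (ae_le_esssup V)
  rw [esssup_le_iff, ← stopLoss_eq_zero_iff]
  exact le_antisymm (hV ▸ h _) (stopLoss_nonneg _ _)

theorem ES_le_ES_iff_stopLoss_le (U V : Lp ℝ ⊤ μ) :
    (∀ t ∈ Icc (0 : ℝ) 1, ES μ t U ≤ ES μ t V) ↔ ∀ K, stopLoss μ U K ≤ stopLoss μ V K := by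
  constructor
  · intro h K
    set t := cdf (μ.map U) K
    rcases lt_or_ge t 1 with ht1 | ht1
    · have ht0 : 0 ≤ t := cdf_nonneg _ _
      have hES := (ES_eq_add_stopLoss_at_cdf U ht1).symm.trans_le
        ((h t ⟨ht0, ht1.le⟩).trans (ES_le_add_stopLoss V ht0 ht1 K))
      exact (div_le_div_iff_of_pos_right (by linarith)).1 (le_of_add_le_add_left hES)
    · rw [stopLoss_eq_zero_of_cdf_eq_one U ht1]
      exact stopLoss_nonneg _ _
  · intro h t ht
    rcases ht.2.lt_or_eq with ht1 | rfl
    · obtain ⟨K, hK⟩ := (isLeast_ES V ht.1 ht1).1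
      calc ES μ t U ≤ K + stopLoss μ U K / (1 - t) := ES_le_add_stopLoss U ht.1 ht1 K
        _ ≤ K + stopLoss μ V K / (1 - t) := by gcongr; exact h K
        _ = ES μ t V := hK
    · rw [ES_one, ES_one]
      exact esssup_le_esssup_of_stopLoss_le h

lemma ES_mono {U V : Lp ℝ ⊤ μ} (h : U ≤ V) (ht : t ∈ Icc 0 1) : ES μ t U ≤ ES μ t V := by
  refine (ES_le_ES_iff_stopLoss_le U V).2 (fun K => integral_mono_ae (integrable_max_sub U K)
    (integrable_max_sub V K) ?_) t ht
  filter_upwards [(Lp.coeFn_le U V).2 h] with ω hω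
  exact max_le_max_right 0 (sub_le_sub_right hω K)

lemma ES_eq_of_map_eq {U V : Lp ℝ ⊤ μ} (h : μ.map U = μ.map V) (ht : t ∈ Icc 0 1) :
    ES μ t U = ES μ t V := by
  have hSL (K : ℝ) : stopLoss μ U K = stopLoss μ V K := by
    rw [stopLoss_eq_integral_map, stopLoss_eq_integral_map, h]
  exact le_antisymm ((ES_le_ES_iff_stopLoss_le U V).2 (fun K => (hSL K).le) t ht)
    ((ES_le_ES_iff_stopLoss_le V U).2 (fun K => (hSL K).ge) t ht)

lemma ES_add_cst_le (X : Lp ℝ ⊤ μ) (ht : t ∈ Icc 0 1) (m : ℝ) :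
    ES μ t (X + cst μ m) ≤ ES μ t X + m := by
  rcases ht.2.lt_or_eq with ht1 | rfl
  · obtain ⟨K, hK⟩ := (isLeast_ES X ht.1 ht1).1
    calc ES μ t (X + cst μ m) ≤ (K + m) + stopLoss μ ⇑(X + cst μ m) (K + m) / (1 - t) :=
          ES_le_add_stopLoss _ ht.1 ht1 _
      _ = ES μ t X + m := by rw [← hK, stopLoss_add_cst, add_sub_cancel_right]; ring
  · rw [ES_one, ES_one, esssup_le_iff]
    filter_upwards [coeFn_add_cst X m, ae_le_esssup X] with ω h1 h2
    rw [h1]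
    linarith

lemma ES_add_cst (X : Lp ℝ ⊤ μ) (ht : t ∈ Icc 0 1) (m : ℝ) :
    ES μ t (X + cst μ m) = ES μ t X + m := by
  refine le_antisymm (ES_add_cst_le X ht m) ?_
  have hX : X + cst μ m + cst μ (-m) = X := by
    rw [add_assoc, ← cst_add, add_neg_cancel, cst_zero, add_zero]
  have h := ES_add_cst_le (X + cst μ m) ht (-m)
  rw [hX] at h
  linarith

lemma ES_cst (c : ℝ) (ht : t ∈ Icc 0 1) : ES μ t (cst μ c) = c := by
  rcases ht.2.lt_or_eq with ht1 | rfl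
  · refine (isLeast_ES (cst μ c) ht.1 ht1).unique ⟨⟨c, by simp [stopLoss_cst]⟩, ?_⟩
    rintro _ ⟨K, rfl⟩
    have : c - K ≤ max (c - K) 0 / (1 - t) :=
      (le_max_left _ _).trans (le_div_self (le_max_right _ _) (by linarith) (by linarith [ht.1]))
    simp only [stopLoss_cst]
    linarith
  · rw [ES_one]
    refine le_antisymm ((esssup_le_iff _ _).2 ((coeFn_cst c).mono fun _ h => h.le)) ?_
    obtain ⟨ω, h1, h2⟩ := ((coeFn_cst c).and (ae_le_esssup (cst μ c))).exists
    exact h1.symm.trans_le h2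

lemma abs_ES_le_norm (X : Lp ℝ ⊤ μ) (ht : t ∈ Icc 0 1) : |ES μ t X| ≤ ‖X‖ := by
  rw [abs_le]
  constructor
  · simpa only [ES_cst _ ht] using ES_mono (cst_le_iff.2
      ((ae_abs_le_norm X).mono fun _ h => neg_le_of_abs_le h)) ht
  · simpa only [ES_cst _ ht] using ES_mono (le_cst_iff.2
      ((ae_abs_le_norm X).mono fun _ h => (le_abs_self _).trans h)) ht

lemma ES_smul_add_smul_le (U V : Lp ℝ ⊤ μ) {l : ℝ} (hl0 : 0 ≤ l) (hl1 : l ≤ 1)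
    (ht : t ∈ Icc 0 1) : ES μ t (l • U + (1 - l) • V) ≤ l * ES μ t U + (1 - l) * ES μ t V := by
  rcases ht.2.lt_or_eq with ht1 | rfl
  · obtain ⟨KU, hKU⟩ := (isLeast_ES U ht.1 ht1).1
    obtain ⟨KV, hKV⟩ := (isLeast_ES V ht.1 ht1).1
    dsimp only at hKU hKV
    calc ES μ t (l • U + (1 - l) • V)
        ≤ (l * KU + (1 - l) * KV)
            + stopLoss μ ⇑(l • U + (1 - l) • V) (l * KU + (1 - l) * KV) / (1 - t) :=
          ES_le_add_stopLoss _ ht.1 ht1 _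
      _ ≤ (l * KU + (1 - l) * KV)
            + (l * stopLoss μ U KU + (1 - l) * stopLoss μ V KV) / (1 - t) := by
          gcongr
          exact stopLoss_smul_add_smul_le U V hl0 hl1 KU KV
      _ = l * ES μ t U + (1 - l) * ES μ t V := by rw [← hKU, ← hKV]; ring
  · rw [ES_one, ES_one, ES_one, esssup_le_iff]
    filter_upwards [coeFn_smul_add_smul U V l, ae_le_esssup U, ae_le_esssup V] with ω h hU hV
    rw [h]
    exact add_le_add (mul_le_mul_of_nonneg_left hU hl0)
      (mul_le_mul_of_nonneg_left hV (sub_nonneg.2 hl1))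

end ExpectedShortfall

noncomputable def esGap (μ : Measure Ω) [IsFiniteMeasure μ] (Z X : Lp ℝ ⊤ μ) : ℝ :=
  sSup {d : ℝ | ∃ t ∈ Icc (0 : ℝ) 1, d = ES μ t X - ES μ t Z}

section Gap

variable {μ : Measure Ω} [IsProbabilityMeasure μ] {t : ℝ}

lemma psiZ_eq (ρ : Lp ℝ ⊤ μ → ℝ) (Z X : Lp ℝ ⊤ μ) :
    psiZ μ ρ Z X = ρ (Z + cst μ (esGap μ Z X)) := rfl

lemma ES_le_ES_add_esGap (Z X : Lp ℝ ⊤ μ) (ht : t ∈ Icc 0 1) :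
    ES μ t X ≤ ES μ t Z + esGap μ Z X := by
  have hbdd : BddAbove {d : ℝ | ∃ t ∈ Icc (0 : ℝ) 1, d = ES μ t X - ES μ t Z} := by
    refine ⟨‖X‖ + ‖Z‖, ?_⟩
    rintro _ ⟨s, hs, rfl⟩
    linarith [abs_le.1 (abs_ES_le_norm X hs), abs_le.1 (abs_ES_le_norm Z hs)]
  have := le_csSup hbdd ⟨t, ht, rfl⟩
  rw [esGap]
  linarith

lemma esGap_le {Z X : Lp ℝ ⊤ μ} {c : ℝ} (h : ∀ t ∈ Icc (0 : ℝ) 1, ES μ t X ≤ ES μ t Z + c) :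
    esGap μ Z X ≤ c := by
  refine csSup_le ⟨_, 0, ⟨le_rfl, zero_le_one⟩, rfl⟩ ?_
  rintro _ ⟨t, ht, rfl⟩
  linarith [h t ht]

lemma esGap_self (X : Lp ℝ ⊤ μ) : esGap μ X X = 0 :=
  le_antisymm (esGap_le fun _ _ => by simp)
    (by linarith [ES_le_ES_add_esGap X X (t := 0) ⟨le_rfl, zero_le_one⟩])

lemma esGap_mono (Z : Lp ℝ ⊤ μ) {U V : Lp ℝ ⊤ μ} (h : U ≤ V) : esGap μ Z U ≤ esGap μ Z V :=
  esGap_le fun _ ht => (ES_mono h ht).trans (ES_le_ES_add_esGap Z V ht)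

lemma esGap_add_cst_le (Z U : Lp ℝ ⊤ μ) (m : ℝ) :
    esGap μ Z (U + cst μ m) ≤ esGap μ Z U + m :=
  esGap_le fun t ht => by linarith [ES_add_cst U ht m, ES_le_ES_add_esGap Z U ht]

lemma esGap_eq_of_map_eq (Z : Lp ℝ ⊤ μ) {U V : Lp ℝ ⊤ μ} (h : μ.map U = μ.map V) :
    esGap μ Z U = esGap μ Z V :=
  le_antisymm
    (esGap_le fun _ ht => (ES_eq_of_map_eq h ht).trans_le (ES_le_ES_add_esGap Z V ht))
    (esGap_le fun _ ht => (ES_eq_of_map_eq h ht).symm.trans_le (ES_le_ES_add_esGap Z U ht))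

lemma esGap_smul_add_smul_le (Z U V : Lp ℝ ⊤ μ) {l : ℝ} (hl0 : 0 ≤ l) (hl1 : l ≤ 1) :
    esGap μ Z (l • U + (1 - l) • V) ≤ max (esGap μ Z U) (esGap μ Z V) := by
  refine esGap_le fun t ht => (ES_smul_add_smul_le U V hl0 hl1 ht).trans ?_
  calc l * ES μ t U + (1 - l) * ES μ t V
      ≤ l * (ES μ t Z + max (esGap μ Z U) (esGap μ Z V))
        + (1 - l) * (ES μ t Z + max (esGap μ Z U) (esGap μ Z V)) := by
        gcongr
        exacts [(ES_le_ES_add_esGap Z U ht).trans (by gcongr; exact le_max_left _ _),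
          (ES_le_ES_add_esGap Z V ht).trans (by gcongr; exact le_max_right _ _)]
    _ = ES μ t Z + max (esGap μ Z U) (esGap μ Z V) := by ring

end Gap

theorem ssdConsistent_repr_general (μ : Measure Ω) [IsProbabilityMeasure μ]
    (ρ : Lp ℝ ⊤ μ → ℝ)
    (hmono : ∀ U V : Lp ℝ ⊤ μ, U ≤ V → ρ U ≤ ρ V)
    (hcs : ∀ (U : Lp ℝ ⊤ μ) (m : ℝ), 0 ≤ m → ρ (U + cst μ m) ≤ ρ U + m)
    (hssd : ∀ U V : Lp ℝ ⊤ μ,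
      (∀ K : ℝ, ∫ ω, max (V ω - K) 0 ∂μ ≤ ∫ ω, max (U ω - K) 0 ∂μ) → ρ V ≤ ρ U) :
    (∀ Z : Lp ℝ ⊤ μ,
      (∀ U V : Lp ℝ ⊤ μ, U ≤ V → psiZ μ ρ Z U ≤ psiZ μ ρ Z V) ∧
      (∀ (U : Lp ℝ ⊤ μ) (m : ℝ), 0 ≤ m → psiZ μ ρ Z (U + cst μ m) ≤ psiZ μ ρ Z U + m) ∧
      (∀ U V : Lp ℝ ⊤ μ, Measure.map (⇑U) μ = Measure.map (⇑V) μ →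
        psiZ μ ρ Z U = psiZ μ ρ Z V) ∧
      (∀ (U V : Lp ℝ ⊤ μ) (l : ℝ), 0 ≤ l → l ≤ 1 →
        psiZ μ ρ Z (l • U + (1 - l) • V) ≤ max (psiZ μ ρ Z U) (psiZ μ ρ Z V))) ∧
    (∀ X : Lp ℝ ⊤ μ, psiZ μ ρ X X = ρ X ∧ ∀ Z : Lp ℝ ⊤ μ, ρ X ≤ psiZ μ ρ Z X) := by
  have hρ (Z : Lp ℝ ⊤ μ) : Monotone fun c => ρ (Z + cst μ c) := fun _ _ hab =>
    hmono _ _ (add_le_add_right (monotone_cst hab) Z)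
  refine ⟨fun Z => ⟨?_, ?_, ?_, ?_⟩, fun X => ⟨?_, fun Z => ?_⟩⟩
  · exact fun U V h => hρ Z (esGap_mono Z h)
  · intro U m hm
    calc psiZ μ ρ Z (U + cst μ m) ≤ ρ (Z + cst μ (esGap μ Z U) + cst μ m) := by
          rw [add_assoc, ← cst_add]
          exact hρ Z (esGap_add_cst_le Z U m)
      _ ≤ psiZ μ ρ Z U + m := hcs _ m hm
  · intro U V h
    rw [psiZ_eq, psiZ_eq, esGap_eq_of_map_eq Z h]
  · intro U V l hl0 hl1
    rw [psiZ_eq, psiZ_eq, psiZ_eq, ← (hρ Z).map_max]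
    exact hρ Z (esGap_smul_add_smul_le Z U V hl0 hl1)
  · rw [psiZ_eq, esGap_self, cst_zero, add_zero]
  · refine hssd _ _ ((ES_le_ES_iff_stopLoss_le X (Z + cst μ (esGap μ Z X))).1 fun t ht => ?_)
    rw [ES_add_cst Z ht]
    exact ES_le_ES_add_esGap Z X ht

/-- For an SSD-consistent cash-subadditive risk measure `ρ` on an atomless
probability space, each `ψ_Z` is monotone, cash subadditive, law invariant and
quasi-convex, and `ρ(X) = min_Z ψ_Z(X)` (attained at `Z = X`). -/
theorem ssdConsistent_repr (μ : Measure Ω) [IsProbabilityMeasure μ] [NullSingletonClass μ]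
    (ρ : Lp ℝ ⊤ μ → ℝ)
    (hmono : ∀ U V : Lp ℝ ⊤ μ, U ≤ V → ρ U ≤ ρ V)
    (hcs : ∀ (U : Lp ℝ ⊤ μ) (m : ℝ), 0 ≤ m → ρ (U + cst μ m) ≤ ρ U + m)
    (hssd : ∀ U V : Lp ℝ ⊤ μ,
      (∀ K : ℝ, ∫ ω, max (V ω - K) 0 ∂μ ≤ ∫ ω, max (U ω - K) 0 ∂μ) → ρ V ≤ ρ U) :
    (∀ Z : Lp ℝ ⊤ μ,
      (∀ U V : Lp ℝ ⊤ μ, U ≤ V → psiZ μ ρ Z U ≤ psiZ μ ρ Z V) ∧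
      (∀ (U : Lp ℝ ⊤ μ) (m : ℝ), 0 ≤ m → psiZ μ ρ Z (U + cst μ m) ≤ psiZ μ ρ Z U + m) ∧
      (∀ U V : Lp ℝ ⊤ μ, Measure.map (⇑U) μ = Measure.map (⇑V) μ →
        psiZ μ ρ Z U = psiZ μ ρ Z V) ∧
      (∀ (U V : Lp ℝ ⊤ μ) (l : ℝ), 0 ≤ l → l ≤ 1 →
        psiZ μ ρ Z (l • U + (1 - l) • V) ≤ max (psiZ μ ρ Z U) (psiZ μ ρ Z V))) ∧
    (∀ X : Lp ℝ ⊤ μ, psiZ μ ρ X X = ρ X ∧ ∀ Z : Lp ℝ ⊤ μ, ρ X ≤ psiZ μ ρ Z X) :=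
  ssdConsistent_repr_general μ ρ hmono hcs hssd
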